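/- arXiv:1506.01454 — 2 statements merged into one kernel-verified Lean document; each statement's English description precedes it below -/
import Mathlib

section
/- Let H_• be a subproduct system. The left shifts S_j and right shifts R_k on the Fock space H_ℕ satisfy the commutation relations [S_j, R_k] = 0 and [S_j*, R_k*] = 0 for all j, k ∈ {1,…,n}. -/
open scoped Matrix

noncomputable section

/-- Words of length `m` in the alphabet `{1,…,n}`. -/
abbrev Wd (n m : ℕ) := Fin m → Fin n

/-- The `m`-th full tensor power `H^{⊗m}` of `H = ℂ^n`, realized as the Euclidean
space with orthonormal basis indexed by words of length `m`. -/
abbrev TP (n m : ℕ) : Type := EuclideanSpace ℂ (Wd n m)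

variable {n : ℕ}

/-- Continuous linear map associated to a (possibly rectangular) matrix. -/
def ofMatR {ι κ : Type} [Fintype ι] [Fintype κ] [DecidableEq ι] [DecidableEq κ]
    (M : Matrix ι κ ℂ) : EuclideanSpace ℂ κ →L[ℂ] EuclideanSpace ℂ ι :=
  LinearMap.toContinuousLinearMap (Matrix.toEuclideanLin M)

/-- Matrix entry of an operator in the standard basis. -/
def ent {a : ℕ} (A : TP n a →L[ℂ] TP n a) (w v : Wd n a) : ℂ :=
  A (EuclideanSpace.single v 1) w

def wfst {m k : ℕ} (w : Wd n (m + k)) : Wd n m := fun i => w (Fin.castAdd k i)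
def wsnd {m k : ℕ} (w : Wd n (m + k)) : Wd n k := fun i => w (Fin.natAdd m i)

/-- Tensor product of vectors, under the identification `H^{⊗m} ⊗ H^{⊗k} = H^{⊗(m+k)}`. -/
def tmul {m k : ℕ} (x : TP n m) (y : TP n k) : TP n (m + k) :=
  (WithLp.equiv 2 _).symm (fun w => x (wfst w) * y (wsnd w))

/-- Tensor product of subspaces `K ⊗ L ⊆ H^{⊗(m+k)}`. -/
def tensorSub {m k : ℕ} (K : Submodule ℂ (TP n m)) (L : Submodule ℂ (TP n k)) :
    Submodule ℂ (TP n (m + k)) :=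
  Submodule.span ℂ {z | ∃ x ∈ K, ∃ y ∈ L, z = tmul x y}

/-- Tensor product of operators, under `H^{⊗m} ⊗ H^{⊗k} = H^{⊗(m+k)}`. -/
def opT {m k : ℕ} (A : TP n m →L[ℂ] TP n m) (B : TP n k →L[ℂ] TP n k) :
    TP n (m + k) →L[ℂ] TP n (m + k) :=
  ofMatR (Matrix.of fun w v => ent A (wfst w) (wfst v) * ent B (wsnd w) (wsnd v))

/-- A subproduct system: `H_0 = ℂ` and `H_{m+k} ⊆ H_m ⊗ H_k`. -/
def IsSubproduct (H : ∀ m, Submodule ℂ (TP n m)) : Prop :=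
  H 0 = ⊤ ∧ ∀ m k, H (m + k) ≤ tensorSub (H m) (H k)

/-- The orthogonal projection `p_m : H^{⊗m} → H_m` (as an operator on `H^{⊗m}`). -/
def prj (H : ∀ m, Submodule ℂ (TP n m)) (m : ℕ) : TP n m →L[ℂ] TP n m :=
  (H m).subtypeL ∘L (H m).orthogonalProjectionOnto

/-- Left creation operator `x ↦ e_j ⊗ x`. -/
def lcreate (j : Fin n) (m : ℕ) : TP n m →L[ℂ] TP n (m + 1) :=
  ofMatR (Matrix.of fun (w : Wd n (m + 1)) (v : Wd n m) =>
    if w 0 = j ∧ (fun i : Fin m => w i.succ) = v then 1 else 0)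

/-- Right creation operator `x ↦ x ⊗ e_j`. -/
def rcreate (j : Fin n) (m : ℕ) : TP n m →L[ℂ] TP n (m + 1) :=
  ofMatR (Matrix.of fun (w : Wd n (m + 1)) (v : Wd n m) =>
    if w (Fin.last m) = j ∧ (fun i : Fin m => w i.castSucc) = v then 1 else 0)

/-- Graded component of the left shift `S_j : H_m → H_{m+1}`, `φ ↦ p_{m+1}(e_j ⊗ φ)`. -/
def lsh (H : ∀ m, Submodule ℂ (TP n m)) (j : Fin n) (m : ℕ) : TP n m →L[ℂ] TP n (m + 1) :=
  prj H (m + 1) ∘L lcreate j m ∘L prj H m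

/-- Graded component of the right shift `R_j : H_m → H_{m+1}`, `φ ↦ p_{m+1}(φ ⊗ e_j)`. -/
def rsh (H : ∀ m, Submodule ℂ (TP n m)) (j : Fin n) (m : ℕ) : TP n m →L[ℂ] TP n (m + 1) :=
  prj H (m + 1) ∘L rcreate j m ∘L prj H m

/-- Iterated left shift `S_r = S_{r_1} ⋯ S_{r_d}` as a map `H_m → H_{m+d}`. -/
def lshW (H : ∀ m, Submodule ℂ (TP n m)) (m : ℕ) :
    ∀ d, Wd n d → (TP n m →L[ℂ] TP n (m + d))
  | 0, _ => ContinuousLinearMap.id ℂ _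
  | d + 1, r => lsh H (r 0) (m + d) ∘L lshW H m d (Fin.tail r)

/-- Iterated right shift `R_r = R_{r_1} ⋯ R_{r_d}` as a map `H_m → H_{m+d}`. -/
def rshW (H : ∀ m, Submodule ℂ (TP n m)) (m : ℕ) :
    ∀ d, Wd n d → (TP n m →L[ℂ] TP n (m + d))
  | 0, _ => ContinuousLinearMap.id ℂ _
  | d + 1, r => rsh H (r (Fin.last d)) (m + d) ∘L rshW H m d (Fin.init r)

/-- Canonical unitary identification `H^{⊗a} = H^{⊗b}` for `a = b`. -/
def castTP {a b : ℕ} (h : a = b) : TP n a →L[ℂ] TP n b :=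
  ofMatR (Matrix.of fun (w : Wd n b) (v : Wd n a) =>
    if (fun i => w (Fin.cast h i)) = v then 1 else 0)

/-- `S_s : H_m → H_l` for a word `s` of length `l - m`. -/
def lshWTo (H : ∀ m, Submodule ℂ (TP n m)) (m l : ℕ) (h : m ≤ l) (s : Wd n (l - m)) :
    TP n m →L[ℂ] TP n l :=
  castTP (by omega : m + (l - m) = l) ∘L lshW H m (l - m) s

/-- `R_r : H_m → H_l` for a word `r` of length `l - m`. -/
def rshWTo (H : ∀ m, Submodule ℂ (TP n m)) (m l : ℕ) (h : m ≤ l) (r : Wd n (l - m)) :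
    TP n m →L[ℂ] TP n l :=
  castTP (by omega : m + (l - m) = l) ∘L rshW H m (l - m) r

/-- Extension of an operator on `H_m` by zero to `H^{⊗m}`. -/
def extOp (H : ∀ m, Submodule ℂ (TP n m)) {m : ℕ} (A : ↥(H m) →L[ℂ] ↥(H m)) :
    TP n m →L[ℂ] TP n m :=
  (H m).subtypeL ∘L A ∘L (H m).orthogonalProjectionOnto

/-- Compression of an operator on `H^{⊗m}` to `H_m`. -/
def cmpOp (H : ∀ m, Submodule ℂ (TP n m)) {m : ℕ} (T : TP n m →L[ℂ] TP n m) :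
    ↥(H m) →L[ℂ] ↥(H m) :=
  (H m).orthogonalProjectionOnto ∘L T ∘L (H m).subtypeL

def tk {m l : ℕ} (h : m ≤ l) (w : Wd n l) : Wd n m := fun i => w (Fin.castLE h i)
def dr (m : ℕ) {l : ℕ} (w : Wd n l) : Wd n (l - m) :=
  fun i => w ⟨m + i.1, by have := i.isLt; omega⟩

/-- `A ⊗ B` on `H^{⊗l} = H^{⊗m} ⊗ H^{⊗(l-m)}`. -/
def opTG {m l : ℕ} (h : m ≤ l) (A : TP n m →L[ℂ] TP n m)
    (B : TP n (l - m) →L[ℂ] TP n (l - m)) : TP n l →L[ℂ] TP n l :=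
  ofMatR (Matrix.of fun w v => ent A (tk h w) (tk h v) * ent B (dr m w) (dr m v))

/-- The inductive-system map `ι_{m,l}(A) = p_l (A ⊗ 1) p_l : B(H_m) → B(H_l)`. -/
def iota (H : ∀ m, Submodule ℂ (TP n m)) {m l : ℕ} (h : m ≤ l)
    (A : ↥(H m) →L[ℂ] ↥(H m)) : ↥(H l) →L[ℂ] ↥(H l) :=
  cmpOp H (opTG h (extOp H A) (ContinuousLinearMap.id ℂ (TP n (l - m))))

/-- The chirality-flipped inductive map `ῑ_{m,l}(A) = Σ_{|s|=l-m} S_s A S_s^* |_{H_l}`. -/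
def iotabar (H : ∀ m, Submodule ℂ (TP n m)) {m l : ℕ} (h : m ≤ l)
    (A : ↥(H m) →L[ℂ] ↥(H m)) : ↥(H l) →L[ℂ] ↥(H l) :=
  cmpOp H (∑ s : Wd n (l - m),
    lshWTo H m l h s ∘L extOp H A ∘L ContinuousLinearMap.adjoint (lshWTo H m l h s))

/-- The word `j` of length one. -/
def letter (j : Fin n) : Wd n 1 := fun _ => j

/-- `Q^{⊗m}` on `H^{⊗m}`. -/
def tpow (Q : TP n 1 →L[ℂ] TP n 1) (m : ℕ) : TP n m →L[ℂ] TP n m :=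
  ofMatR (Matrix.of fun w v => ∏ i : Fin m, ent Q (letter (w i)) (letter (v i)))

/-- Diagonal entry `(Q^{⊗d})_{r,r}`. -/
def Qdg (Q : TP n 1 →L[ℂ] TP n 1) {d : ℕ} (r : Wd n d) : ℂ :=
  ∏ i, ent Q (letter (r i)) (letter (r i))

/-- Trace of an operator. -/
def trOp {E : Type*} [NormedAddCommGroup E] [Module ℂ E] (A : E →L[ℂ] E) : ℂ :=
  LinearMap.trace ℂ E A.toLinearMap

/-- `Tr(Q_m)` where `Q_m = p_m Q^{⊗m} p_m ∈ B(H_m)`. -/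
def trQ (H : ∀ m, Submodule ℂ (TP n m)) (Q : TP n 1 →L[ℂ] TP n 1) (m : ℕ) : ℂ :=
  trOp (cmpOp H (tpow Q m))

/-- The state `φ_m(A) = Tr(ρ^{(m)} A)`, `ρ^{(m)} = Q_m / Tr(Q_m)`. -/
def phiSt (H : ∀ m, Submodule ℂ (TP n m)) (Q : TP n 1 →L[ℂ] TP n 1) (m : ℕ)
    (A : ↥(H m) →L[ℂ] ↥(H m)) : ℂ :=
  trOp (cmpOp H (tpow Q m) ∘L A) / trQ H Q m

/-- The projective-system map
`j_{l,m}(A) = (Tr Q_m / Tr Q_l) Σ_{|r|=l-m} (Q^{⊗(l-m)})_{r,r} R_r^* A R_r |_{H_m}`. -/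
def jmap (H : ∀ m, Submodule ℂ (TP n m)) (Q : TP n 1 →L[ℂ] TP n 1) {m l : ℕ} (h : m ≤ l)
    (A : ↥(H l) →L[ℂ] ↥(H l)) : ↥(H m) →L[ℂ] ↥(H m) :=
  (trQ H Q m / trQ H Q l) • cmpOp H (∑ r : Wd n (l - m),
    Qdg Q r • (ContinuousLinearMap.adjoint (rshWTo H m l h r) ∘L extOp H A ∘L rshWTo H m l h r))

/-- `ρ^{(m)} = Q_m / Tr(Q_m)`, extended by zero to `H^{⊗m}`. -/
def rhoExt (H : ∀ m, Submodule ℂ (TP n m)) (Q : TP n 1 →L[ℂ] TP n 1) (m : ℕ) :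
    TP n m →L[ℂ] TP n m :=
  (trQ H Q m)⁻¹ • (prj H m ∘L tpow Q m ∘L prj H m)

/-- The normalization constant `√(Tr(Q_m)Tr(Q_k)/Tr(Q_{m+k}))`. -/
def lamC (H : ∀ m, Submodule ℂ (TP n m)) (Q : TP n 1 →L[ℂ] TP n 1) (m k : ℕ) : ℂ :=
  (trQ H Q m * trQ H Q k / trQ H Q (m + k)) ^ ((1 : ℂ) / 2)

/-- Right tensoring `x ↦ x ⊗ y` as a continuous linear map. -/
def tensR {m k : ℕ} (y : TP n k) : TP n m →L[ℂ] TP n (m + k) :=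
  ofMatR (Matrix.of fun w v => if wfst w = v then y (wsnd w) else 0)

/-- The map `V_{m,l} ψ = √(TrQ_m TrQ_{l-m}/TrQ_l) Σ_{|r|=l-m} p_l (R_r^* ψ ⊗ e_r)`,
realized as an operator on `H^{⊗(m+k)}` (with `l = m + k`). -/
def Vml (H : ∀ m, Submodule ℂ (TP n m)) (Q : TP n 1 →L[ℂ] TP n 1) (m k : ℕ) :
    TP n (m + k) →L[ℂ] TP n (m + k) :=
  lamC H Q m k • ∑ r : Wd n k,
    prj H (m + k) ∘L tensR (EuclideanSpace.single r 1) ∘L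
      ContinuousLinearMap.adjoint (rshW H m k r)

/-- The claimed adjoint `V_{m,l}^* = √(⋯) (ρ^{(l)})^{-1}(ρ^{(m)} ⊗ ρ^{(l-m)})`. -/
def VmlStar (H : ∀ m, Submodule ℂ (TP n m)) (Q : TP n 1 →L[ℂ] TP n 1) (m k : ℕ) :
    TP n (m + k) →L[ℂ] TP n (m + k) :=
  lamC H Q m k •
    (extOp H (trQ H Q (m + k) • Ring.inverse (cmpOp H (tpow Q (m + k)))) ∘L
      opT (rhoExt H Q m) (rhoExt H Q k))

/-- The adjoint, with instances supplied explicitly. -/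
def adjC {E F : Type*} [NormedAddCommGroup E] [NormedAddCommGroup F]
    [InnerProductSpace ℂ E] [InnerProductSpace ℂ F] [CompleteSpace E] [CompleteSpace F]
    (T : E →L[ℂ] F) : F →L[ℂ] E :=
  @ContinuousLinearMap.adjoint ℂ E F _ _ _ _ _ _ _ T

/-- Complete positivity of a map between operator algebras on Hilbert spaces:
positive matrices over the domain are sent to positive matrices over the codomain.
(Here `Nᴴ` is written as the transpose of the entrywise adjoint.) -/
def IsCP {E F' : Type*} [NormedAddCommGroup E] [InnerProductSpace ℂ E] [CompleteSpace E]
    [NormedAddCommGroup F'] [InnerProductSpace ℂ F'] [CompleteSpace F']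
    (Φ : (E →L[ℂ] E) → (F' →L[ℂ] F')) : Prop :=
  ∀ (d : ℕ) (M : Matrix (Fin d) (Fin d) (E →L[ℂ] E)),
    (∃ N : Matrix (Fin d) (Fin d) (E →L[ℂ] E), M = (N.map fun T => adjC T)ᵀ * N) →
    ∃ N' : Matrix (Fin d) (Fin d) (F' →L[ℂ] F'), M.map Φ = (N'.map fun T => adjC T)ᵀ * N'

/-- The vacuum vector `Ω ∈ H^{⊗0} = ℂ`. -/
def vac (n : ℕ) : TP n 0 := EuclideanSpace.single default 1

/-- The symmetric subspace `H^{∨m} ⊆ H^{⊗m}`. -/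
def symSub (n m : ℕ) : Submodule ℂ (TP n m) where
  carrier := {x | ∀ (σ : Equiv.Perm (Fin m)) (w : Wd n m), x (w ∘ σ) = x w}
  add_mem' := by
    intro a b ha hb σ w
    show (a + b) (w ∘ σ) = (a + b) w
    simp only [PiLp.add_apply, ha σ w, hb σ w]
  zero_mem' := by
    intro σ w
    show (0 : TP n m) (w ∘ σ) = (0 : TP n m) w
    simp
  smul_mem' := by
    intro c x hx σ w
    show (c • x) (w ∘ σ) = (c • x) w
    simp only [PiLp.smul_apply, hx σ w]

/-- Rank-one operator `|x⟩⟨x|`. -/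
def rankOne {F : Type*} [NormedAddCommGroup F] [InnerProductSpace ℂ F] (x : F) :
    F →L[ℂ] F :=
  (innerSL ℂ x).smulRight x

end

/-! For a subproduct system, creation of a letter on either side maps `H_mᗮ` into `H_{m+1}ᗮ`,
because `H_{m+1}` sits inside `H_m ⊗ H_1` and inside `H_1 ⊗ H_m`. Hence the projection `p_m`
in front of a creation operator can be dropped when a projection `p_{m+1}` follows it, so
both `S_j R_k` and `R_k S_j` equal `φ ↦ p_{m+2}(e_j ⊗ φ ⊗ e_k)`. The second relation is the adjoint of the first. -/

open scoped InnerProductSpace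

theorem Submodule.starProjection_apply_starProjection_of_mapsTo
    {𝕜 E F : Type*} [RCLike 𝕜] [NormedAddCommGroup E] [InnerProductSpace 𝕜 E]
    [NormedAddCommGroup F] [InnerProductSpace 𝕜 F] {K : Submodule 𝕜 E} {L : Submodule 𝕜 F}
    [K.HasOrthogonalProjection] [L.HasOrthogonalProjection] {T : E →L[𝕜] F}
    (hT : Set.MapsTo T Kᗮ Lᗮ) (x : E) :
    L.starProjection (T (K.starProjection x)) = L.starProjection (T x) := by
  have h := L.starProjection_apply_eq_zero_iff.mpr (hT (K.sub_starProjection_mem_orthogonal x))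
  rw [map_sub, map_sub, sub_eq_zero] at h
  exact h.symm

section FockSpace

variable {n : ℕ}

lemma ofMatR_apply {ι κ : Type} [Fintype ι] [Fintype κ] [DecidableEq ι] [DecidableEq κ]
    (M : Matrix ι κ ℂ) (x : EuclideanSpace ℂ κ) (w : ι) :
    ofMatR M x w = ∑ v, M w v * x v := rfl

lemma tmul_apply {a b : ℕ} (x : TP n a) (y : TP n b) (w : Wd n (a + b)) :
    tmul x y w = x (wfst w) * y (wsnd w) := rfl

lemma castTP_apply {a b : ℕ} (h : a = b) (x : TP n a) (w : Wd n b) :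
    castTP h x w = x fun i => w (Fin.cast h i) := by
  simp [castTP, ofMatR_apply, ite_mul, Finset.sum_ite_eq]

lemma castTP_rfl_apply {a : ℕ} (x : TP n a) : castTP rfl x = x := by
  ext w
  simp [castTP_apply]

lemma inner_castTP_right {a b : ℕ} (h : a = b) (z : TP n b) (x : TP n a) :
    ⟪z, castTP h x⟫_ℂ = ⟪castTP h.symm z, x⟫_ℂ := by
  subst h
  simp only [castTP_rfl_apply]

lemma castTP_mem {a b : ℕ} (h : a = b) (H : ∀ m, Submodule ℂ (TP n m)) {x : TP n a}
    (hx : x ∈ H a) : castTP h x ∈ H b := by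
  subst h
  rwa [castTP_rfl_apply]

lemma lcreate_apply (j : Fin n) (m : ℕ) (x : TP n m) (w : Wd n (m + 1)) :
    lcreate j m x w = if w 0 = j then x (fun i => w i.succ) else 0 := by
  by_cases h : w 0 = j <;>
    simp [lcreate, ofMatR_apply, h, ite_and, ite_mul, Finset.sum_ite_eq]

lemma rcreate_apply (k : Fin n) (m : ℕ) (x : TP n m) (w : Wd n (m + 1)) :
    rcreate k m x w = if w (Fin.last m) = k then x (fun i => w i.castSucc) else 0 := by
  by_cases h : w (Fin.last m) = k <;>
    simp [rcreate, ofMatR_apply, h, ite_and, ite_mul, Finset.sum_ite_eq]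

lemma lcreate_rcreate_comm (j k : Fin n) (m : ℕ) (x : TP n m) :
    lcreate j (m + 1) (rcreate k m x) = rcreate k (m + 1) (lcreate j m x) := by
  ext w
  rw [lcreate_apply, rcreate_apply, rcreate_apply, lcreate_apply]
  have h0 : ((0 : Fin (m + 1)).castSucc : Fin (m + 2)) = 0 := rfl
  have hL : ((Fin.last m).succ : Fin (m + 2)) = Fin.last (m + 1) := rfl
  by_cases h1 : w 0 = j <;> by_cases h2 : w (Fin.last (m + 1)) = k <;>
    simp [h1, h2, h0, hL, -Fin.castSucc_succ, Fin.succ_castSucc]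

lemma inner_tmul {a b : ℕ} (x u : TP n a) (y v : TP n b) :
    ⟪tmul x y, tmul u v⟫_ℂ = ⟪x, u⟫_ℂ * ⟪y, v⟫_ℂ := by
  simp only [PiLp.inner_apply, RCLike.inner_apply]
  rw [Finset.sum_mul_sum,
    ← Equiv.sum_comp ((Equiv.sumArrowEquivProdArrow (Fin a) (Fin b) (Fin n)).symm.trans
      (Equiv.arrowCongr finSumFinEquiv (Equiv.refl (Fin n))))
      (fun w => tmul u v w * (starRingEnd ℂ) (tmul x y w)),
    Fintype.sum_prod_type]
  refine Finset.sum_congr rfl fun s _ => Finset.sum_congr rfl fun t _ => ?_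
  have hfst : wfst (n := n) (Sum.elim s t ∘ finSumFinEquiv.symm) = s := by
    funext i; simp [wfst]
  have hsnd : wsnd (n := n) (m := a) (Sum.elim s t ∘ finSumFinEquiv.symm) = t := by
    funext i; simp [wsnd]
  change tmul u v (Sum.elim s t ∘ finSumFinEquiv.symm) *
      (starRingEnd ℂ) (tmul x y (Sum.elim s t ∘ finSumFinEquiv.symm)) = _
  rw [tmul_apply, tmul_apply, hfst, hsnd, map_mul]
  ring

lemma letter_injective : Function.Injective (letter (n := n)) :=
  fun _ _ h => congrFun h 0

lemma rcreate_eq_tmul (k : Fin n) (m : ℕ) (x : TP n m) :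
    rcreate k m x = tmul x (EuclideanSpace.single (letter k) 1) := by
  ext w
  have hfst : wfst (k := 1) w = fun i => w i.castSucc := rfl
  have hsnd : wsnd (m := m) (k := 1) w = letter (w (Fin.last m)) := by
    funext i
    rw [Subsingleton.elim i 0]
    rfl
  rw [rcreate_apply, tmul_apply, hfst, hsnd, PiLp.single_apply]
  simp only [letter_injective.eq_iff]
  split_ifs <;> simp

lemma lcreate_eq_castTP_tmul (j : Fin n) (m : ℕ) (x : TP n m) :
    lcreate j m x = castTP (Nat.add_comm 1 m) (tmul (EuclideanSpace.single (letter j) 1) x) := by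
  ext w
  have hfst : wfst (m := 1) (k := m) (fun i => w (Fin.cast (Nat.add_comm 1 m) i)) =
      letter (w 0) := by
    funext i
    rw [Subsingleton.elim i 0]
    rfl
  have hsnd : wsnd (m := 1) (k := m) (fun i => w (Fin.cast (Nat.add_comm 1 m) i)) =
      fun i => w i.succ := by
    funext i
    simp only [wsnd]
    congr 1
    ext
    simp
  rw [lcreate_apply, castTP_apply, tmul_apply, hfst, hsnd, PiLp.single_apply]
  simp only [letter_injective.eq_iff]
  split_ifs <;> simp

lemma mem_orthogonal_tensorSub {a b : ℕ} {K : Submodule ℂ (TP n a)} {L : Submodule ℂ (TP n b)}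
    {z : TP n (a + b)} (hz : ∀ x ∈ K, ∀ y ∈ L, ⟪tmul x y, z⟫_ℂ = 0) :
    z ∈ (tensorSub K L)ᗮ := by
  have hortho : tensorSub K L ⟂ Submodule.span ℂ {z} := by
    refine Submodule.isOrtho_span.mpr ?_
    rintro _ ⟨x, hx, y, hy, rfl⟩ _ rfl
    exact hz x hx y hy
  exact Submodule.isOrtho_iff_le.mp hortho.symm (Submodule.mem_span_singleton_self z)

lemma tmul_mem_orthogonal_tensorSub_left {a b : ℕ} {K : Submodule ℂ (TP n a)}
    (L : Submodule ℂ (TP n b)) {x : TP n a} (hx : x ∈ Kᗮ) (y : TP n b) :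
    tmul x y ∈ (tensorSub K L)ᗮ :=
  mem_orthogonal_tensorSub fun u hu v _ => by
    rw [inner_tmul, Submodule.inner_right_of_mem_orthogonal hu hx, zero_mul]

lemma tmul_mem_orthogonal_tensorSub_right {a b : ℕ} (K : Submodule ℂ (TP n a))
    {L : Submodule ℂ (TP n b)} (x : TP n a) {y : TP n b} (hy : y ∈ Lᗮ) :
    tmul x y ∈ (tensorSub K L)ᗮ :=
  mem_orthogonal_tensorSub fun u _ v hv => by
    rw [inner_tmul, Submodule.inner_right_of_mem_orthogonal hv hy, mul_zero]

variable (H : ∀ m, Submodule ℂ (TP n m))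

lemma mapsTo_rcreate_orthogonal {m : ℕ} (hH : H (m + 1) ≤ tensorSub (H m) (H 1)) (k : Fin n) :
    Set.MapsTo (rcreate k m) (H m)ᗮ (H (m + 1))ᗮ := fun x hx => by
  rw [rcreate_eq_tmul]
  exact Submodule.orthogonal_le hH (tmul_mem_orthogonal_tensorSub_left _ hx _)

lemma mapsTo_lcreate_orthogonal {m : ℕ} (hH : H (1 + m) ≤ tensorSub (H 1) (H m)) (j : Fin n) :
    Set.MapsTo (lcreate j m) (H m)ᗮ (H (m + 1))ᗮ := fun x hx => by
  refine (Submodule.mem_orthogonal _ _).mpr fun z hz => ?_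
  rw [lcreate_eq_castTP_tmul, inner_castTP_right]
  exact Submodule.inner_right_of_mem_orthogonal (hH (castTP_mem _ H hz))
    (tmul_mem_orthogonal_tensorSub_right _ _ hx)

lemma prj_lcreate_prj {m : ℕ} (hH : H (1 + m) ≤ tensorSub (H 1) (H m)) (j : Fin n)
    (x : TP n m) : prj H (m + 1) (lcreate j m (prj H m x)) = prj H (m + 1) (lcreate j m x) :=
  Submodule.starProjection_apply_starProjection_of_mapsTo (mapsTo_lcreate_orthogonal H hH j) x

lemma prj_rcreate_prj {m : ℕ} (hH : H (m + 1) ≤ tensorSub (H m) (H 1)) (k : Fin n)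
    (x : TP n m) : prj H (m + 1) (rcreate k m (prj H m x)) = prj H (m + 1) (rcreate k m x) :=
  Submodule.starProjection_apply_starProjection_of_mapsTo (mapsTo_rcreate_orthogonal H hH k) x

lemma lsh_apply {m : ℕ} (hH : H (1 + m) ≤ tensorSub (H 1) (H m)) (j : Fin n) (x : TP n m) :
    lsh H j m x = prj H (m + 1) (lcreate j m x) :=
  prj_lcreate_prj H hH j x

lemma rsh_apply {m : ℕ} (hH : H (m + 1) ≤ tensorSub (H m) (H 1)) (k : Fin n) (x : TP n m) :
    rsh H k m x = prj H (m + 1) (rcreate k m x) :=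
  prj_rcreate_prj H hH k x

end FockSpace

/-- **Statement 6.** The left and right shifts satisfy `[S_j, R_k] = 0` and
`[S_j^*, R_k^*] = 0`. -/
theorem stmt6 {n : ℕ} (H : ∀ m, Submodule ℂ (TP n m)) (hsp : IsSubproduct H)
    (j k : Fin n) (m : ℕ) :
    lsh H j (m + 1) ∘L rsh H k m = rsh H k (m + 1) ∘L lsh H j m ∧
    ContinuousLinearMap.adjoint (rsh H k m) ∘L ContinuousLinearMap.adjoint (lsh H j (m + 1)) =
      ContinuousLinearMap.adjoint (lsh H j m) ∘L ContinuousLinearMap.adjoint (rsh H k (m + 1)) := by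
  have hcomm : lsh H j (m + 1) ∘L rsh H k m = rsh H k (m + 1) ∘L lsh H j m := by
    ext1 x
    simp only [ContinuousLinearMap.comp_apply]
    rw [lsh_apply H (hsp.2 1 _), rsh_apply H (hsp.2 _ 1), prj_lcreate_prj H (hsp.2 1 _),
      rsh_apply H (hsp.2 _ 1), lsh_apply H (hsp.2 1 _), prj_rcreate_prj H (hsp.2 _ 1),
      lcreate_rcreate_comm]
  refine ⟨hcomm, ?_⟩
  simpa only [ContinuousLinearMap.adjoint_comp] using congrArg ContinuousLinearMap.adjoint hcomm
end

section
/- With Q and Q_m as above, for any m ≤ l the operator Q_l^{-1} (Q_m ⊗ Q_{l−m}), viewed as a map from H_m ⊗ H_{l−m} to H_l after composing with the projection, equals the orthogonal projection p_l : H_m ⊗ H_{l−m} → H_l. That is, Q_l^{-1} p_l (Q_m ⊗ Q_{l−m}) = p_l on H_m ⊗ H_{l−m}. -/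
open scoped Matrix

/-! On `H_m ⊗ H_{l-m}` the projections `p_m ⊗ p_{l-m}` act trivially, so there
`Q_m ⊗ Q_{l-m}` is just `Q^{⊗l}`. Being self-adjoint and leaving `H_l` invariant, `Q^{⊗l}`
commutes with `p_l`; hence `p_l Q^{⊗l} = Q_l p_l`, and `Q_l`, the compression of the invertible
operator `Q^{⊗l}` to a reducing subspace, is invertible. -/

open ContinuousLinearMap

theorem IsSelfAdjoint.commute_of_mul_mul_eq {R : Type*} [Semiring R] [StarRing R] {p t : R}
    (hp : IsSelfAdjoint p) (ht : IsSelfAdjoint t) (h : p * t * p = t * p) : Commute p t := by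
  have h' : p * t * p = p * t := by
    simpa only [star_mul, hp.star_eq, ht.star_eq, mul_assoc] using congrArg star h
  exact h'.symm.trans h

namespace Submodule

variable {𝕜 E : Type*} [RCLike 𝕜] [NormedAddCommGroup E] [InnerProductSpace 𝕜 E]
  (K : Submodule 𝕜 E) [K.HasOrthogonalProjection]

noncomputable def compress (T : E →L[𝕜] E) : K →L[𝕜] K :=
  K.orthogonalProjectionOnto ∘L T ∘L K.subtypeL

variable {K}

lemma compress_apply (T : E →L[𝕜] E) (y : K) :
    K.compress T y = K.orthogonalProjectionOnto (T y) := rfl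

lemma compress_one : K.compress 1 = 1 := by
  ext y
  simp [compress_apply]

lemma orthogonalProjectionOnto_apply_of_commute {T : E →L[𝕜] E}
    (hT : Commute K.starProjection T) (x : E) :
    K.orthogonalProjectionOnto (T x) = K.compress T (K.orthogonalProjectionOnto x) := by
  calc K.orthogonalProjectionOnto (T x)
      = K.orthogonalProjectionOnto (K.starProjection (T x)) :=
        (orthogonalProjectionOnto_starProjection_of_le le_rfl _).symm
    _ = K.orthogonalProjectionOnto (T (K.starProjection x)) := by
        rw [← mul_apply_eq_comp, hT.eq, mul_apply_eq_comp]

lemma compress_mul_of_commute (S : E →L[𝕜] E) {T : E →L[𝕜] E}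
    (hT : Commute K.starProjection T) : K.compress (S * T) = K.compress S * K.compress T := by
  ext y
  change (K.orthogonalProjectionOnto (S (T y)) : E) =
    K.orthogonalProjectionOnto (S (K.starProjection (T y)))
  rw [← mul_apply_eq_comp K.starProjection, hT.eq, mul_apply_eq_comp,
    starProjection_eq_self_iff.mpr y.2]

lemma isUnit_compress_of_commute {T : E →L[𝕜] E} (hT : IsUnit T)
    (hc : Commute K.starProjection T) : IsUnit (K.compress T) := by
  obtain ⟨u, rfl⟩ := hT
  have hc' : Commute K.starProjection ↑u⁻¹ := hc.units_inv_right
  refine ⟨⟨K.compress u, K.compress ↑u⁻¹, ?_, ?_⟩, rfl⟩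
  · rw [← compress_mul_of_commute _ hc', u.mul_inv, compress_one]
  · rw [← compress_mul_of_commute _ hc, u.inv_mul, compress_one]

lemma inverse_compress_apply_orthogonalProjectionOnto {T : E →L[𝕜] E} (hT : IsUnit T)
    (hc : Commute K.starProjection T) (x : E) :
    Ring.inverse (K.compress T) (K.orthogonalProjectionOnto (T x)) =
      K.orthogonalProjectionOnto x := by
  rw [orthogonalProjectionOnto_apply_of_commute hc, ← mul_apply_eq_comp,
    Ring.inverse_mul_cancel _ (isUnit_compress_of_commute hT hc), one_apply_eq_self]

end Submodule

namespace Matrix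

variable {ι α R : Type*} [Fintype ι] [CommSemiring R]

def kroneckerPow (a : Matrix α α R) : Matrix (ι → α) (ι → α) R :=
  of fun w v => ∏ i, a (w i) (v i)

lemma kroneckerPow_mul [DecidableEq ι] [Fintype α] (a b : Matrix α α R) :
    kroneckerPow (ι := ι) (a * b) = kroneckerPow a * kroneckerPow b := by
  ext w v
  simp only [kroneckerPow, mul_apply, of_apply, Fintype.prod_sum, ← Finset.prod_mul_distrib]

lemma kroneckerPow_one [DecidableEq α] : kroneckerPow (ι := ι) (1 : Matrix α α R) = 1 := by
  ext w v
  simp only [kroneckerPow, one_apply, of_apply, Finset.prod_boole, Finset.mem_univ, true_imp_iff,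
    funext_iff]

lemma kroneckerPow_conjTranspose [StarRing R] (a : Matrix α α R) :
    kroneckerPow (ι := ι) aᴴ = (kroneckerPow a)ᴴ := by
  ext w v
  simp only [kroneckerPow, conjTranspose_apply, of_apply, star_prod]

end Matrix

section TensorPower

open Matrix

variable {n : ℕ}

lemma ofMatR_eq_toEuclideanCLM {ι : Type} [Fintype ι] [DecidableEq ι] (M : Matrix ι ι ℂ) :
    ofMatR M = toEuclideanCLM (n := ι) (𝕜 := ℂ) M := rfl

lemma ent_eq_toEuclideanCLM_symm {a : ℕ} (A : TP n a →L[ℂ] TP n a) (w v : Wd n a) :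
    ent A w v = (toEuclideanCLM (n := Wd n a) (𝕜 := ℂ)).symm A w v := rfl

lemma ent_ofMatR {a : ℕ} (M : Matrix (Wd n a) (Wd n a) ℂ) (w v : Wd n a) :
    ent (ofMatR M) w v = M w v := by
  rw [ent_eq_toEuclideanCLM_symm, ofMatR_eq_toEuclideanCLM, StarAlgEquiv.symm_apply_apply]

lemma apply_eq_sum_ent {a : ℕ} (A : TP n a →L[ℂ] TP n a) (x : TP n a) (w : Wd n a) :
    A x w = ∑ v, ent A w v * x v := by
  conv_lhs => rw [← StarAlgEquiv.apply_symm_apply (toEuclideanCLM (n := Wd n a) (𝕜 := ℂ)) A]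
  simp only [ofLp_toEuclideanCLM, mulVec, dotProduct, ent_eq_toEuclideanCLM_symm]

noncomputable def letterMatrix (A : TP n 1 →L[ℂ] TP n 1) : Matrix (Fin n) (Fin n) ℂ :=
  of fun a b => ent A (letter a) (letter b)

lemma letterMatrix_eq_submatrix (A : TP n 1 →L[ℂ] TP n 1) :
    letterMatrix A = ((toEuclideanCLM (n := Wd n 1) (𝕜 := ℂ)).symm A).submatrix
      (Equiv.funUnique (Fin 1) (Fin n)).symm (Equiv.funUnique (Fin 1) (Fin n)).symm := rfl

lemma tpow_eq_ofMatR (A : TP n 1 →L[ℂ] TP n 1) (l : ℕ) :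
    tpow A l = ofMatR (kroneckerPow (ι := Fin l) (letterMatrix A)) := rfl

lemma letterMatrix_mul (A B : TP n 1 →L[ℂ] TP n 1) :
    letterMatrix (A * B) = letterMatrix A * letterMatrix B := by
  rw [letterMatrix_eq_submatrix, letterMatrix_eq_submatrix, letterMatrix_eq_submatrix, map_mul,
    submatrix_mul_equiv]

lemma letterMatrix_one : letterMatrix (1 : TP n 1 →L[ℂ] TP n 1) = 1 := by
  rw [letterMatrix_eq_submatrix, map_one, submatrix_one_equiv]

lemma letterMatrix_star (A : TP n 1 →L[ℂ] TP n 1) :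
    letterMatrix (star A) = (letterMatrix A)ᴴ := by
  -- `map_star` would time out in instance search on the inverse equivalence
  have hstar : (toEuclideanCLM (n := Wd n 1) (𝕜 := ℂ)).symm (star A) =
      star ((toEuclideanCLM (n := Wd n 1) (𝕜 := ℂ)).symm A) :=
    (toEuclideanCLM (n := Wd n 1) (𝕜 := ℂ)).symm.map_star' A
  rw [letterMatrix_eq_submatrix, letterMatrix_eq_submatrix, hstar, star_eq_conjTranspose,
    conjTranspose_submatrix]

lemma tpow_mul (A B : TP n 1 →L[ℂ] TP n 1) (l : ℕ) :
    tpow (A * B) l = tpow A l * tpow B l := by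
  simp only [tpow_eq_ofMatR, letterMatrix_mul, kroneckerPow_mul, ofMatR_eq_toEuclideanCLM,
    map_mul]

lemma tpow_one (l : ℕ) : tpow (1 : TP n 1 →L[ℂ] TP n 1) l = 1 := by
  simp only [tpow_eq_ofMatR, letterMatrix_one, kroneckerPow_one, ofMatR_eq_toEuclideanCLM, map_one]

lemma tpow_star (A : TP n 1 →L[ℂ] TP n 1) (l : ℕ) : tpow (star A) l = star (tpow A l) := by
  rw [tpow_eq_ofMatR, tpow_eq_ofMatR, letterMatrix_star, kroneckerPow_conjTranspose,
    ofMatR_eq_toEuclideanCLM, ofMatR_eq_toEuclideanCLM, ← star_eq_conjTranspose,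
    map_star]

noncomputable def tpowHom (l : ℕ) : (TP n 1 →L[ℂ] TP n 1) →* (TP n l →L[ℂ] TP n l) where
  toFun A := tpow A l
  map_one' := tpow_one l
  map_mul' A B := tpow_mul A B l

lemma IsSelfAdjoint.tpow {A : TP n 1 →L[ℂ] TP n 1} (hA : IsSelfAdjoint A) (l : ℕ) :
    IsSelfAdjoint (tpow A l) := by
  rw [IsSelfAdjoint, ← tpow_star, hA.star_eq]

end TensorPower

section TensorProduct

open Matrix

variable {n : ℕ}

lemma sum_mul_sum_wfst_wsnd {m k : ℕ} (f : Wd n m → ℂ) (g : Wd n k → ℂ) :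
    ∑ w : Wd n (m + k), f (wfst w) * g (wsnd w) = (∑ a, f a) * ∑ b, g b := by
  rw [Fintype.sum_mul_sum, ← Fintype.sum_prod_type']
  exact Fintype.sum_equiv (Fin.appendEquiv m k).symm _ _ fun _ => rfl

lemma opT_tmul {m k : ℕ} (A : TP n m →L[ℂ] TP n m) (B : TP n k →L[ℂ] TP n k)
    (x : TP n m) (y : TP n k) : opT A B (tmul x y) = tmul (A x) (B y) := by
  ext w
  change opT A B (tmul x y) w = A x (wfst w) * B y (wsnd w)
  rw [apply_eq_sum_ent, apply_eq_sum_ent, apply_eq_sum_ent,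
    ← sum_mul_sum_wfst_wsnd (fun a => ent A (wfst w) a * x a) (fun b => ent B (wsnd w) b * y b)]
  refine Finset.sum_congr rfl fun v _ => ?_
  rw [opT, ent_ofMatR, of_apply]
  change _ * (x (wfst v) * y (wsnd v)) = _
  ring

lemma opT_tpow (Q : TP n 1 →L[ℂ] TP n 1) (m k : ℕ) :
    opT (tpow Q m) (tpow Q k) = tpow Q (m + k) := by
  rw [opT, tpow_eq_ofMatR (l := m + k)]
  congr 1
  ext w v
  rw [of_apply, tpow_eq_ofMatR, tpow_eq_ofMatR, ent_ofMatR, ent_ofMatR]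
  simp only [kroneckerPow, of_apply, Fin.prod_univ_add, wfst, wsnd]

lemma opT_comp_starProjection_apply {m k : ℕ} {K : Submodule ℂ (TP n m)}
    {L : Submodule ℂ (TP n k)} (A : TP n m →L[ℂ] TP n m) (B : TP n k →L[ℂ] TP n k)
    {x : TP n (m + k)} (hx : x ∈ tensorSub K L) :
    opT (A ∘L K.starProjection) (B ∘L L.starProjection) x = opT A B x := by
  refine LinearMap.eqOn_span
    (f := (opT (A ∘L K.starProjection) (B ∘L L.starProjection)).toLinearMap)
    (g := (opT A B).toLinearMap) ?_ hx
  rintro _ ⟨a, ha, b, hb, rfl⟩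
  simp only [coe_coe, opT_tmul, ContinuousLinearMap.comp_apply,
    Submodule.starProjection_eq_self_iff.mpr ha, Submodule.starProjection_eq_self_iff.mpr hb]

lemma prj_eq_starProjection (H : ∀ m, Submodule ℂ (TP n m)) (m : ℕ) :
    prj H m = (H m).starProjection := rfl

end TensorProduct

theorem stmt8_general {n : ℕ} (H : ∀ m, Submodule ℂ (TP n m))
    (Q : TP n 1 →L[ℂ] TP n 1) (hpos : Q.IsPositive) (hinv : IsUnit Q)
    (hpres : ∀ m, prj H m ∘L tpow Q m ∘L prj H m = tpow Q m ∘L prj H m)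
    (m k : ℕ) (x : TP n (m + k)) (hx : x ∈ tensorSub (H m) (H k)) :
    Ring.inverse (cmpOp H (tpow Q (m + k)))
        ((H (m + k)).orthogonalProjectionOnto
          (opT (prj H m ∘L tpow Q m ∘L prj H m) (prj H k ∘L tpow Q k ∘L prj H k) x)) =
      (H (m + k)).orthogonalProjectionOnto x := by
  simp only [prj_eq_starProjection] at hpres ⊢
  have hcomm : Commute (H (m + k)).starProjection (tpow Q (m + k)) :=
    (isSelfAdjoint_starProjection _).commute_of_mul_mul_eq (hpos.isSelfAdjoint.tpow _)
      (by rw [mul_assoc]; exact hpres _)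
  rw [hpres m, hpres k, opT_comp_starProjection_apply _ _ hx, opT_tpow]
  exact Submodule.inverse_compress_apply_orthogonalProjectionOnto
    (hinv.map (tpowHom (m + k))) hcomm x

/-- **Statement 8.** `Q_l⁻¹ p_l (Q_m ⊗ Q_{l−m}) = p_l` on `H_m ⊗ H_{l−m}`
(with `l = m + k`). -/
theorem stmt8 {n : ℕ} (H : ∀ m, Submodule ℂ (TP n m)) (hsp : IsSubproduct H)
    (Q : TP n 1 →L[ℂ] TP n 1) (hpos : Q.IsPositive) (hinv : IsUnit Q)
    (hpres : ∀ m, prj H m ∘L tpow Q m ∘L prj H m = tpow Q m ∘L prj H m)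
    (m k : ℕ) (x : TP n (m + k)) (hx : x ∈ tensorSub (H m) (H k)) :
    Ring.inverse (cmpOp H (tpow Q (m + k)))
        ((H (m + k)).orthogonalProjectionOnto
          (opT (prj H m ∘L tpow Q m ∘L prj H m) (prj H k ∘L tpow Q k ∘L prj H k) x)) =
      (H (m + k)).orthogonalProjectionOnto x :=
  stmt8_general H Q hpos hinv hpres m k x hx
end
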